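/- arXiv:2104.03791 — 5 statements merged into one kernel-verified Lean document; each statement's English description precedes it below -/
import Mathlib

section
/- If G is a maximal cofinitary subgroup of S(ω) (i.e., every non-identity element of G has only finitely many fixed points, and no proper supergroup of G in S(ω) has this property), then the action of G on ω has only finitely many orbits. -/
/-!
Suppose the maximal cofinitary group `G` had infinitely many orbits. Enumerating the orbits
gives a `G`-invariant rank `r : ℕ → ℕ` taking arbitrarily large values, and a back-and-forth
construction yields a permutation `σ` that moves every point to a point of different rank and
such that the edges `x ↦ σ x` have pairwise distinct weights `max (r x) (r (σ x))`. Then `σ ∉ G`,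
yet `⟨G, σ⟩` is still cofinitary: up to conjugacy a non-trivial element of it is `g` or a
cyclically reduced word `g₁ σ^{±1} ⋯ gₖ σ^{±1}`, and along the closed walk traced by a fixed
point, the step of maximal weight shares its `σ`-edge with a neighbouring step, which forces one
of the finitely many fixed points of some `gᵢ ≠ 1` to occur on the walk.
-/

/-- A subgroup of `Equiv.Perm ℕ` is cofinitary if each of its non-identity
elements has only finitely many fixed points. -/
def IsCofinitaryGroup (G : Subgroup (Equiv.Perm ℕ)) : Prop :=
  ∀ g ∈ G, g ≠ 1 → {n : ℕ | g n = n}.Finite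

open Function Equiv

namespace MaximalCofinitary

variable {α : Type*}

theorem isConj_prod_rotate {G : Type*} [Group G] (l : List G) (n : ℕ) :
    IsConj l.prod (l.rotate n).prod := by
  rw [List.rotate_eq_drop_append_take_mod, List.prod_append, isConj_iff,
    ← List.prod_take_mul_prod_drop l (n % l.length)]
  exact ⟨(l.take (n % l.length)).prod⁻¹, by group⟩

def IsCofinitaryOrOne (g : Perm α) : Prop := g ≠ 1 → {x | g x = x}.Finite

lemma IsCofinitaryOrOne.finite_setOf {g : Perm α} (hg : IsCofinitaryOrOne g) :
    {x | g ≠ 1 ∧ g x = x}.Finite := by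
  by_cases h : g = 1
  · simp [h]
  · exact (hg h).subset fun x hx ↦ hx.2

lemma IsCofinitaryOrOne.of_isConj {g g' : Perm α} (hg : IsCofinitaryOrOne g)
    (h : IsConj g g') : IsCofinitaryOrOne g' := by
  obtain ⟨c, rfl⟩ := isConj_iff.1 h
  intro hne
  have hfix : {x | (c * g * c⁻¹) x = x} = ⇑c⁻¹ ⁻¹' {x | g x = x} := by
    ext x
    simp [← Equiv.eq_symm_apply]
  rw [hfix]
  exact (hg fun h1 ↦ hne (by simp [h1])).preimage (Equiv.injective _).injOn

theorem exists_rank_of_infinite_orbits {G : Type*} [Group G] [MulAction G α] [Countable α]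
    [Infinite (Quotient (MulAction.orbitRel G α))] :
    ∃ r : α → ℕ, (∀ (g : G) x, r (g • x) = r x) ∧ ∀ n, ∃ x, n < r x := by
  obtain ⟨β, hβ⟩ := Countable.exists_injective_nat (Quotient (MulAction.orbitRel G α))
  refine ⟨fun x ↦ β ⟦x⟧, fun g x ↦ congrArg β (Quotient.sound ⟨g, rfl⟩), fun n ↦ ?_⟩
  obtain ⟨_, ⟨c, rfl⟩, hc⟩ := (Set.infinite_range_of_injective hβ).exists_gt n
  induction c using Quotient.inductionOn with | h x => exact ⟨x, hc⟩

section RankMatching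

variable (r : α → ℕ)

def IsRankMatching (S : Set (α × α)) : Prop :=
  (∀ p ∈ S, r p.1 ≠ r p.2) ∧
    S.Pairwise fun p p' ↦
      p.1 ≠ p'.1 ∧ p.2 ≠ p'.2 ∧ max (r p.1) (r p.2) ≠ max (r p'.1) (r p'.2)

variable {r}

lemma IsRankMatching.insert_of_max_lt {S : Set (α × α)} (hS : IsRankMatching r S) {a : α × α}
    (ha : r a.1 ≠ r a.2) (hfst : ∀ p ∈ S, p.1 ≠ a.1) (hsnd : ∀ p ∈ S, p.2 ≠ a.2)
    (hmax : ∀ p ∈ S, max (r p.1) (r p.2) < max (r a.1) (r a.2)) :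
    IsRankMatching r (insert a S) := by
  refine ⟨Set.forall_mem_insert.2 ⟨ha, hS.1⟩, Set.pairwise_insert.2 ⟨hS.2, fun p hp _ ↦ ?_⟩⟩
  exact ⟨⟨(hfst p hp).symm, (hsnd p hp).symm, (hmax p hp).ne'⟩,
    ⟨hfst p hp, hsnd p hp, (hmax p hp).ne⟩⟩

lemma exists_rank_gt (hr : ∀ n, ∃ y, n < r y) (S : Finset (α × α)) (x : α) :
    ∃ y, r x < r y ∧ ∀ p ∈ S, max (r p.1) (r p.2) < r y := by
  obtain ⟨y, hy⟩ := hr (max (r x) (S.sup fun p ↦ max (r p.1) (r p.2)))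
  exact ⟨y, (le_max_left _ _).trans_lt hy,
    fun p hp ↦ ((Finset.le_sup hp).trans (le_max_right _ _)).trans_lt hy⟩

lemma IsRankMatching.exists_insert_fst (hr : ∀ n, ∃ y, n < r y) {S : Finset (α × α)}
    (hS : IsRankMatching r S) (x : α) :
    ∃ S' : Finset (α × α), IsRankMatching r S' ∧ S ⊆ S' ∧ ∃ p ∈ S', p.1 = x := by
  classical
  by_cases hx : ∃ p ∈ S, p.1 = x
  · exact ⟨S, hS, subset_rfl, hx⟩
  push Not at hx
  obtain ⟨y, hxy, hy⟩ := exists_rank_gt hr S x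
  refine ⟨insert (x, y) S, ?_, Finset.subset_insert _ _, _, Finset.mem_insert_self _ _, rfl⟩
  rw [Finset.coe_insert]
  refine hS.insert_of_max_lt hxy.ne hx (fun p hp h ↦ ?_) fun p hp ↦ ?_
  · exact (hy p hp).not_ge (h ▸ le_max_right _ _)
  · simpa [max_eq_right hxy.le] using hy p hp

lemma IsRankMatching.exists_insert_snd (hr : ∀ n, ∃ y, n < r y) {S : Finset (α × α)}
    (hS : IsRankMatching r S) (x : α) :
    ∃ S' : Finset (α × α), IsRankMatching r S' ∧ S ⊆ S' ∧ ∃ p ∈ S', p.2 = x := by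
  classical
  by_cases hx : ∃ p ∈ S, p.2 = x
  · exact ⟨S, hS, subset_rfl, hx⟩
  push Not at hx
  obtain ⟨y, hxy, hy⟩ := exists_rank_gt hr S x
  refine ⟨insert (y, x) S, ?_, Finset.subset_insert _ _, _, Finset.mem_insert_self _ _, rfl⟩
  rw [Finset.coe_insert]
  refine hS.insert_of_max_lt hxy.ne' (fun p hp h ↦ ?_) hx fun p hp ↦ ?_
  · exact (hy p hp).not_ge (h ▸ le_max_left _ _)
  · simpa [max_eq_left hxy.le] using hy p hp

lemma IsRankMatching.exists_perm {R : Set (α × α)} (hR : IsRankMatching r R)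
    (hfst : ∀ x, ∃ p ∈ R, p.1 = x) (hsnd : ∀ x, ∃ p ∈ R, p.2 = x) :
    ∃ σ : Perm α, (∀ x, r (σ x) ≠ r x) ∧ Injective fun x ↦ max (r x) (r (σ x)) := by
  choose f hfR hf using hfst
  have hf_eq : ∀ {p}, p ∈ R → f p.1 = p := fun {p} hp ↦
    hR.2.eq (hfR _) hp fun h ↦ h.1 (hf _)
  have hinj : Injective fun x ↦ (f x).2 := fun x x' h ↦ by
    simpa [hf] using congrArg Prod.fst (hR.2.eq (hfR x) (hfR x') fun h' ↦ h'.2.1 h)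
  have hsurj : Surjective fun x ↦ (f x).2 := fun y ↦ by
    obtain ⟨p, hp, rfl⟩ := hsnd y
    exact ⟨p.1, by simp [hf_eq hp]⟩
  let σ : Perm α := ofBijective _ ⟨hinj, hsurj⟩
  have hσ (x : α) : σ x = (f x).2 := rfl
  refine ⟨σ, fun x ↦ ?_, fun x x' h ↦ ?_⟩
  · simpa [hσ, hf] using (hR.1 _ (hfR x)).symm
  · have := hR.2.eq (hfR x) (hfR x') fun h' ↦ h'.2.2 (by simpa [hσ, hf] using h)
    simpa [hf] using congrArg Prod.fst this

theorem exists_perm_rank_ne_injective_max [Countable α] (hr : ∀ n, ∃ y, n < r y) :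
    ∃ σ : Perm α, (∀ x, r (σ x) ≠ r x) ∧ Injective fun x ↦ max (r x) (r (σ x)) := by
  have := Encodable.ofCountable α
  let P := {S : Finset (α × α) // IsRankMatching r S}
  let D : α ⊕ α → Order.Cofinal P
    | .inl x => ⟨{S | ∃ p ∈ S.1, p.1 = x}, fun S ↦ by
        obtain ⟨S', hS', hle, hx⟩ := S.2.exists_insert_fst hr x
        exact ⟨⟨S', hS'⟩, hx, hle⟩⟩
    | .inr x => ⟨{S | ∃ p ∈ S.1, p.2 = x}, fun S ↦ by
        obtain ⟨S', hS', hle, hx⟩ := S.2.exists_insert_snd hr x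
        exact ⟨⟨S', hS'⟩, hx, hle⟩⟩
  let seq := Order.sequenceOfCofinals (⟨∅, by simp [IsRankMatching]⟩ : P) D
  have hmono : Monotone fun n ↦ ((seq n).1 : Set (α × α)) := fun m n h ↦
    Finset.coe_subset.2 (Order.sequenceOfCofinals.monotone _ D h)
  refine IsRankMatching.exists_perm (R := ⋃ n, ((seq n).1 : Set (α × α)))
    ⟨fun p hp ↦ ?_, (Set.pairwise_iUnion hmono.directed_le).2 fun n ↦ (seq n).2.2⟩
    (fun x ↦ ?_) fun x ↦ ?_
  · obtain ⟨n, hn⟩ := Set.mem_iUnion.1 hp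
    exact (seq n).2.1 p hn
  · obtain ⟨p, hp, hpx⟩ := Order.sequenceOfCofinals.encode_mem _ D (.inl x)
    exact ⟨p, Set.mem_iUnion.2 ⟨_, hp⟩, hpx⟩
  · obtain ⟨p, hp, hpx⟩ := Order.sequenceOfCofinals.encode_mem _ D (.inr x)
    exact ⟨p, Set.mem_iUnion.2 ⟨_, hp⟩, hpx⟩

end RankMatching

section Words

variable {β : Type*} {r : α → β} {σ : Perm α}

def letter (σ : Perm α) (p : Perm α × Bool) : Perm α := p.1 * cond p.2 σ σ⁻¹

def word (σ : Perm α) (L : List (Perm α × Bool)) : Perm α := (L.map (letter σ)).prod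

@[simp] lemma word_nil : word σ [] = 1 := rfl

@[simp] lemma word_cons (p : Perm α × Bool) (L : List (Perm α × Bool)) :
    word σ (p :: L) = letter σ p * word σ L := by
  simp [word]

lemma mul_word_cons (g : Perm α) (p : Perm α × Bool) (L : List (Perm α × Bool)) :
    g * word σ (p :: L) = word σ ((g * p.1, p.2) :: L) := by
  simp [letter, mul_assoc]

lemma letter_mul_letter_of_eq_one {p q : Perm α × Bool} (hq : q.1 = 1) (hpq : p.2 ≠ q.2) :
    letter σ p * letter σ q = p.1 := by
  obtain ⟨g, _ | _⟩ := p <;> obtain ⟨h, _ | _⟩ := q <;> simp_all [letter, mul_assoc]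

lemma isConj_word_rotate (L : List (Perm α × Bool)) (n : ℕ) :
    IsConj (word σ L) (word σ (L.rotate n)) := by
  rw [word, word, List.map_rotate]
  exact isConj_prod_rotate _ n

/-- The point `u` such that the step `y ↦ σ^{±1} y` runs along the `σ`-edge from `u` to `σ u`. -/
def edgeSource (σ : Perm α) (b : Bool) (y : α) : α := cond b y (σ⁻¹ y)

lemma max_rank_edgeSource [LinearOrder β] (b : Bool) (y : α) :
    max (r (edgeSource σ b y)) (r (σ (edgeSource σ b y))) =
      max (r (cond b σ σ⁻¹ y)) (r y) := by
  cases b <;> simp [edgeSource, max_comm]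

lemma backtrack (hσ : ∀ x, r (σ x) ≠ r x) {g : Perm α} (hg : ∀ z, r (g z) = r z)
    {b b' : Bool} {y y' : α} (hy : y = letter σ (g, b') y')
    (hedge : edgeSource σ b y = edgeSource σ b' y') : b ≠ b' ∧ g y = y := by
  cases b <;> cases b' <;> simp only [edgeSource, letter, cond_true, cond_false,
    Perm.mul_apply] at hy hedge
  · obtain rfl := σ⁻¹.injective hedge
    exact absurd (by simpa using (congrArg r hy).trans (hg _)) (hσ (σ⁻¹ y))
  · subst hedge
    exact ⟨by simp, by simpa using hy.symm⟩
  · exact ⟨by simp, by rw [hedge] at hy ⊢; exact hy.symm⟩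
  · obtain rfl := hedge
    exact absurd ((hg _).symm.trans (congrArg r hy).symm) (hσ y)

/-- Take the step of maximal weight `max (r (v i)) (r (v (s i)))`: the neighbouring step sharing
its endpoint of larger rank has at least that weight, so by injectivity of the weight both steps
run along the same `σ`-edge. -/
theorem exists_backtrack [LinearOrder β] {ι : Type*} [Finite ι] [Nonempty ι]
    (hσ : ∀ x, r (σ x) ≠ r x) (hinj : Injective fun x ↦ max (r x) (r (σ x)))
    {s : ι → ι} (hs : Surjective s) {a : ι → Perm α × Bool} (ha : ∀ i z, r ((a i).1 z) = r z)
    {v : ι → α} (hv : ∀ i, v i = letter σ (a i) (v (s i))) :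
    ∃ i, (a i).2 ≠ (a (s i)).2 ∧ (a (s i)).1 (v (s i)) = v (s i) := by
  set e : ι → α := fun i ↦ edgeSource σ (a i).2 (v (s i))
  have hrv (i : ι) : r (v i) = r (cond (a i).2 σ σ⁻¹ (v (s i))) := by
    rw [hv i, letter, Perm.mul_apply, ha]
  have hweight (i : ι) : max (r (e i)) (r (σ (e i))) = max (r (v i)) (r (v (s i))) := by
    rw [max_rank_edgeSource, hrv i]
  obtain ⟨i₀, hi₀⟩ := Finite.exists_max fun i ↦ max (r (v i)) (r (v (s i)))
  suffices ∃ i, e i = e (s i) from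
    this.imp fun i hi ↦ backtrack hσ (ha (s i)) (hv (s i)) hi
  rcases max_choice (r (v i₀)) (r (v (s i₀))) with h | h
  · obtain ⟨i, rfl⟩ := hs i₀
    refine ⟨i, hinj ?_⟩
    simp only [hweight]
    exact le_antisymm (hi₀ i) (h.trans_le (le_max_right _ _))
  · refine ⟨i₀, hinj ?_⟩
    simp only [hweight]
    exact le_antisymm (h.trans_le (le_max_left _ _)) (hi₀ (s i₀))

/-- No cancellation `σ^{±1} * 1 * σ^{∓1}` occurs between cyclically consecutive letters. -/
def IsCyclicallyReduced (L : List (Perm α × Bool)) : Prop :=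
  ∀ i : Fin L.length, L[finRotate _ i].1 = 1 → L[finRotate _ i].2 = L[i].2

lemma val_finRotate {k : ℕ} (i : Fin k) : (finRotate k i : ℕ) = (i + 1) % k := by
  have := i.neZero
  rw [finRotate_apply, Fin.val_add, Fin.val_one', Nat.add_mod_mod]

theorem IsCyclicallyReduced.finite_setOf_word_apply_eq [LinearOrder β] {L : List (Perm α × Bool)}
    (hred : IsCyclicallyReduced L) (hL : L ≠ []) (hσ : ∀ x, r (σ x) ≠ r x)
    (hinj : Injective fun x ↦ max (r x) (r (σ x))) (hrank : ∀ p ∈ L, ∀ z, r (p.1 z) = r z)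
    (hcof : ∀ p ∈ L, IsCofinitaryOrOne p.1) :
    {x | word σ L x = x}.Finite := by
  have : NeZero L.length := ⟨by simpa using hL⟩
  refine (Set.finite_iUnion fun j : Fin L.length ↦
    ((hcof _ (List.getElem_mem j.2)).finite_setOf.preimage
      (Equiv.injective (word σ (L.drop j))).injOn)).subset fun x (hx : word σ L x = x) ↦ ?_
  have hwrap (n : ℕ) (hn : n ≤ L.length) :
      word σ (L.drop (n % L.length)) x = word σ (L.drop n) x := by
    rcases hn.lt_or_eq with hn | rfl
    · rw [Nat.mod_eq_of_lt hn]
    · simpa using hx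
  obtain ⟨i, hne, hfix⟩ := exists_backtrack (ι := Fin L.length) hσ hinj
    (finRotate _).surjective (a := fun i ↦ L[i]) (fun i ↦ hrank _ (List.getElem_mem _))
    (v := fun i ↦ word σ (L.drop i) x) fun i ↦ by
      simp only [List.drop_eq_getElem_cons i.2, word_cons, Perm.mul_apply, val_finRotate,
        hwrap _ i.2, Fin.getElem_fin]
  exact Set.mem_iUnion.2 ⟨finRotate _ i, fun h1 ↦ hne (hred i h1).symm, hfix⟩

lemma exists_isConj_mul_word_of_not_isCyclicallyReduced {L : List (Perm α × Bool)}
    (hred : ¬ IsCyclicallyReduced L) :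
    ∃ p ∈ L, ∃ M : List (Perm α × Bool), M.length + 2 = L.length ∧ (∀ q ∈ M, q ∈ L) ∧
      IsConj (word σ L) (p.1 * word σ M) := by
  simp only [IsCyclicallyReduced, not_forall] at hred
  obtain ⟨i, hone, hne⟩ := hred
  have hk : 1 < L.length := by
    by_contra! hk
    have : Subsingleton (Fin L.length) := Fin.subsingleton_iff_le_one.2 hk
    exact hne (congrArg (fun j : Fin L.length ↦ L[j].2) (Subsingleton.elim _ _))
  set l := L.rotate i
  set M := l.drop 2
  have hl : l = L[i] :: L[finRotate _ i] :: M := by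
    have hlen : l.length = L.length := List.length_rotate ..
    rw [← List.drop_zero (l := l), List.drop_eq_getElem_cons (by omega),
      List.drop_eq_getElem_cons (by omega)]
    simp only [l, List.getElem_rotate, List.cons.injEq]
    refine ⟨by simp [Nat.mod_eq_of_lt i.2], ?_, rfl⟩
    simp only [Fin.getElem_fin, val_finRotate, Nat.zero_add, Nat.add_comm 1]
  refine ⟨L[i], List.getElem_mem _, M, by simp [M, l]; omega,
    fun q hq ↦ List.mem_rotate.1 (List.mem_of_mem_drop hq), ?_⟩
  have hword : word σ l = L[i].1 * word σ M := by
    rw [hl, word_cons, word_cons, ← mul_assoc, letter_mul_letter_of_eq_one hone (Ne.symm hne)]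
  exact hword ▸ isConj_word_rotate L i

theorem isCofinitaryOrOne_mul_word [LinearOrder β] {G : Subgroup (Perm α)}
    (hcof : ∀ g ∈ G, IsCofinitaryOrOne g) (hrank : ∀ g ∈ G, ∀ z, r (g z) = r z)
    (hσ : ∀ x, r (σ x) ≠ r x) (hinj : Injective fun x ↦ max (r x) (r (σ x)))
    {L : List (Perm α × Bool)} (hL : ∀ p ∈ L, p.1 ∈ G) {g : Perm α} (hg : g ∈ G) :
    IsCofinitaryOrOne (g * word σ L) := by
  induction hn : L.length using Nat.strong_induction_on generalizing L g with
  | _ n ih =>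
  obtain _ | ⟨p, L⟩ := L
  · simpa using hcof g hg
  set L₁ := (g * p.1, p.2) :: L
  have hL₁ : ∀ q ∈ L₁, q.1 ∈ G := by
    simp only [L₁, List.forall_mem_cons] at hL ⊢
    exact ⟨mul_mem hg hL.1, hL.2⟩
  rw [mul_word_cons]
  by_cases hred : IsCyclicallyReduced L₁
  · exact fun _ ↦ hred.finite_setOf_word_apply_eq (List.cons_ne_nil _ _) hσ hinj
      (fun q hq ↦ hrank _ (hL₁ q hq)) fun q hq ↦ hcof _ (hL₁ q hq)
  obtain ⟨q, hq, M, hlen, hM, hconj⟩ := exists_isConj_mul_word_of_not_isCyclicallyReduced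
    (σ := σ) hred
  exact (ih M.length (by simp [L₁] at hlen hn; omega) (fun q hq ↦ hL₁ q (hM q hq)) (hL₁ q hq)
    rfl).of_isConj hconj.symm

lemma exists_eq_word_mul_of_mem_closure {G : Subgroup (Perm α)} {h : Perm α}
    (hh : h ∈ Subgroup.closure (G ∪ {σ} : Set (Perm α))) :
    ∃ L : List (Perm α × Bool), (∀ p ∈ L, p.1 ∈ G) ∧ ∃ g ∈ G, h = word σ L * g := by
  let S : Set (Perm α) :=
    {h | ∃ L : List (Perm α × Bool), (∀ p ∈ L, p.1 ∈ G) ∧ ∃ g ∈ G, h = word σ L * g}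
  have hG (x : Perm α) (hx : x ∈ G) : ∀ y ∈ S, x * y ∈ S := by
    rintro _ ⟨_ | ⟨p, L⟩, hL, g, hg, rfl⟩
    · exact ⟨[], by simp, x * g, mul_mem hx hg, by simp⟩
    · rw [List.forall_mem_cons] at hL
      refine ⟨(x * p.1, p.2) :: L, List.forall_mem_cons.2 ⟨mul_mem hx hL.1, hL.2⟩, g, hg, ?_⟩
      rw [← mul_word_cons, mul_assoc]
  have hσ (b : Bool) : ∀ y ∈ S, cond b σ σ⁻¹ * y ∈ S := by
    rintro _ ⟨L, hL, g, hg, rfl⟩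
    exact ⟨(1, b) :: L, List.forall_mem_cons.2 ⟨one_mem G, hL⟩, g, hg,
      by simp [letter, mul_assoc]⟩
  induction hh using Subgroup.closure_induction_left with
  | one => exact ⟨[], by simp, 1, one_mem G, by simp⟩
  | mul_left x hx y _ ih =>
    obtain hx | rfl := hx
    · exact hG x hx y ih
    · exact hσ true y ih
  | inv_mul_cancel x hx y _ ih =>
    obtain hx | rfl := hx
    · exact hG x⁻¹ (inv_mem hx) y ih
    · exact hσ false y ih

theorem isCofinitaryOrOne_of_mem_closure [LinearOrder β] {G : Subgroup (Perm α)}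
    (hcof : ∀ g ∈ G, IsCofinitaryOrOne g) (hrank : ∀ g ∈ G, ∀ z, r (g z) = r z)
    (hσ : ∀ x, r (σ x) ≠ r x) (hinj : Injective fun x ↦ max (r x) (r (σ x))) {h : Perm α}
    (hh : h ∈ Subgroup.closure (G ∪ {σ} : Set (Perm α))) : IsCofinitaryOrOne h := by
  obtain ⟨L, hL, g, hg, rfl⟩ := exists_eq_word_mul_of_mem_closure hh
  exact (isCofinitaryOrOne_mul_word hcof hrank hσ hinj hL hg).of_isConj
    (isConj_iff.2 ⟨g⁻¹, by group⟩)

end Words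

end MaximalCofinitary

open MaximalCofinitary

/-- **Kastermans.** A maximal cofinitary subgroup of `S(ω)` has only finitely
many orbits under its natural action on `ω`. -/
theorem maximal_cofinitary_group_finitely_many_orbits
    (G : Subgroup (Equiv.Perm ℕ))
    (hcof : IsCofinitaryGroup G)
    (hmax : ∀ H : Subgroup (Equiv.Perm ℕ), G ≤ H → IsCofinitaryGroup H → H = G) :
    Finite (Quotient (MulAction.orbitRel G ℕ)) := by
  by_contra hfin
  have := not_finite_iff_infinite.1 hfin
  obtain ⟨r, hrank, hr⟩ := exists_rank_of_infinite_orbits (G := G) (α := ℕ)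
  obtain ⟨σ, hσ, hinj⟩ := exists_perm_rank_ne_injective_max hr
  have hH : IsCofinitaryGroup (Subgroup.closure (G ∪ {σ})) := fun h hh ↦
    isCofinitaryOrOne_of_mem_closure hcof (fun g hg ↦ hrank ⟨g, hg⟩) hσ hinj hh
  have hσG : σ ∈ G := hmax _ (fun g hg ↦ Subgroup.subset_closure (Or.inl hg)) hH ▸
    Subgroup.subset_closure (Or.inr rfl)
  exact hσ 0 (hrank ⟨σ, hσG⟩ 0)
end

section
/- Let κ be a regular uncountable cardinal with κ^{<κ} = κ. If G ≤ S(κ) is a κ-maximal cofinitary group, then the action of G on κ has fewer than κ many orbits. -/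
/-!
Suppose `G` had `κ = #α` orbits. Well-order `α` in type `κ` and build, by transfinite recursion,
a fixed-point-free involution `σ`: at stage `ξ`, if `ξ` is still unpaired, pair it with a point `c`
whose orbit contains no point paired so far; fewer than `κ` points are paired before `ξ`, so such
an orbit exists. Every element of `⟨G, σ⟩` is conjugate to an element of `G`, to `σ`, or to a
cyclically reduced word `h₀ σ h₁ σ ⋯ hₙ₋₁ σ` with all `hᵢ ∈ G \ {1}`. Following a fixed point of
such a word around its cycle, the point of the cycle paired latest is forced to be fixed by some
`hᵢ`, so the fixed points lie in finitely many translates of fixed-point sets of the `hᵢ`. Hence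
`⟨G, σ⟩` is `κ`-cofinitary, so `σ ∈ G` by maximality, which the freshness of the pairing forbids.
-/

open Cardinal

universe u

/-- A subgroup of `Equiv.Perm α` is `κ`-cofinitary (where `κ = #α`) if each of its
non-identity elements has fewer than `κ` many fixed points. -/
def IsKappaCofinitary {α : Type u} (G : Subgroup (Equiv.Perm α)) : Prop :=
  ∀ g ∈ G, g ≠ 1 → #{x : α | g x = x} < #α

open MulAction Equiv Set
open scoped Ordinal

variable {α : Type u}

theorem Cardinal.mk_biUnion_finset_lt {ι : Type*} {c : Cardinal.{u}} (hc : ℵ₀ ≤ c)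
    (S : Finset ι) {f : ι → Set α} (hf : ∀ i ∈ S, #(f i) < c) : #(⋃ i ∈ S, f i) < c := by
  classical
  induction S using Finset.induction_on with
  | empty => simpa using aleph0_pos.trans_le hc
  | insert i S _ ih =>
    rw [Finset.set_biUnion_insert]
    exact (mk_union_le _ _).trans_lt (add_lt_of_lt hc (hf i (Finset.mem_insert_self i S))
      (ih fun j hj => hf j (Finset.mem_insert_of_mem hj)))

theorem Setoid.exists_forall_not_rel_of_mk_lt (s : Setoid α) (hs : #α ≤ #(Quotient s))
    {S : Set α} (hS : #S < #α) : ∃ c, ∀ x ∈ S, ¬ s x c := by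
  have himage : Quotient.mk s '' S ≠ Set.univ := fun h =>
    ((mk_image_le.trans_lt hS).trans_le hs).ne (by rw [h, mk_univ])
  obtain ⟨q, hq⟩ := ne_univ_iff_exists_notMem _ |>.1 himage
  induction q using Quotient.inductionOn with
  | h c => exact ⟨c, fun x hx hxc => hq ⟨x, hx, Quotient.sound hxc⟩⟩

theorem IsConj.mk_fixedPoints_eq {f g : Perm α} (h : IsConj f g) :
    #{x | f x = x} = #{x | g x = x} := by
  obtain ⟨c, rfl⟩ := isConj_iff.1 h
  exact mk_congr (c.subtypeEquiv fun x => by simp [Perm.mul_apply])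

theorem IsConj.eq_one_or_mk_fixedPoints_lt_iff {f g : Perm α} (h : IsConj f g) {κ : Cardinal} :
    (f = 1 ∨ #{x | f x = x} < κ) ↔ (g = 1 ∨ #{x | g x = x} < κ) := by
  rw [h.mk_fixedPoints_eq]
  exact or_congr_left ⟨fun hf => isConj_one_right.1 (hf ▸ h),
    fun hg => isConj_one_right.1 (hg ▸ h.symm)⟩

section SigmaWord

variable {G : Subgroup (Perm α)} (σ : Perm α)

def sigmaWord (l : List G) : Perm α :=
  (l.map fun h => (h : Perm α) * σ).prod

@[simp]
theorem sigmaWord_nil : sigmaWord σ ([] : List G) = 1 := rfl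

@[simp]
theorem sigmaWord_cons (h : G) (l : List G) :
    sigmaWord σ (h :: l) = h * σ * sigmaWord σ l := rfl

theorem sigmaWord_append (l₁ l₂ : List G) :
    sigmaWord σ (l₁ ++ l₂) = sigmaWord σ l₁ * sigmaWord σ l₂ := by
  simp [sigmaWord]

theorem isConj_sigmaWord_append_comm (l₁ l₂ : List G) :
    IsConj (sigmaWord σ (l₁ ++ l₂)) (sigmaWord σ (l₂ ++ l₁)) :=
  isConj_iff.2 ⟨sigmaWord σ l₂, by simp [sigmaWord_append, mul_assoc]⟩

variable {σ}

theorem isConj_sigmaWord_one_pair (hσ : σ * σ = 1) (h : G) :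
    IsConj (h : Perm α) (sigmaWord σ [1, h]) :=
  isConj_iff.2 ⟨σ, by simp [inv_eq_of_mul_eq_one_right hσ, mul_assoc]⟩

theorem isConj_sigmaWord_one_cons_cons_concat (hσ : σ * σ = 1) (h k : G) (d : List G) :
    IsConj (sigmaWord σ (k * h :: d)) (sigmaWord σ (1 :: h :: (d ++ [k]))) :=
  isConj_iff.2 ⟨((k : Perm α) * σ)⁻¹, by
    simp [sigmaWord_append, mul_assoc, inv_eq_of_mul_eq_one_right hσ]⟩

theorem exists_sigmaWord_mul_of_mem_closure (hσ : σ * σ = 1) {f : Perm α}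
    (hf : f ∈ Subgroup.closure (G ∪ {σ})) : ∃ (l : List G) (g : G), f = sigmaWord σ l * g := by
  have hmul : ∀ a, a ∈ G ∨ a = σ → ∀ f, (∃ (l : List G) (g : G), f = sigmaWord σ l * g) →
      ∃ (l : List G) (g : G), a * f = sigmaWord σ l * g := by
    rintro a (ha | rfl) f ⟨l, g, rfl⟩
    · rcases l with _ | ⟨h, l⟩
      · exact ⟨[], ⟨a, ha⟩ * g, by simp⟩
      · exact ⟨⟨a, ha⟩ * h :: l, g, by simp [mul_assoc]⟩
    · exact ⟨1 :: l, g, by simp [mul_assoc]⟩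
  induction hf using Subgroup.closure_induction_left with
  | one => exact ⟨[], 1, by simp⟩
  | mul_left a ha f _ ih => exact hmul a ha f ih
  | inv_mul_cancel a ha f _ ih =>
    refine hmul a⁻¹ ?_ f ih
    rcases ha with ha | rfl
    exacts [Or.inl (inv_mem ha), Or.inr (inv_eq_of_mul_eq_one_right hσ)]

end SigmaWord

structure IsFreshPairing {ι : Type*} [LinearOrder ι] (s : Setoid α) (σ : Perm α) (idx : α → ι) :
    Prop where
  involutive : Function.Involutive σ
  apply_ne : ∀ x, σ x ≠ x
  idx_apply : ∀ x, idx (σ x) = idx x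
  exists_fresh : ∀ x, ∃ y, (y = x ∨ y = σ x) ∧ ∀ z, s z y → z ≠ y → idx y < idx z

namespace IsFreshPairing

variable {ι : Type*} [LinearOrder ι] {s : Setoid α} {σ : Perm α} {idx : α → ι}

theorem mul_self (hp : IsFreshPairing s σ idx) : σ * σ = 1 :=
  Equiv.ext hp.involutive

theorem not_rel_apply (hp : IsFreshPairing s σ idx) (x : α) : ¬ s (σ x) x := by
  intro hx
  obtain ⟨y, rfl | rfl, hy⟩ := hp.exists_fresh x
  · exact (hy _ hx (hp.apply_ne y)).ne (hp.idx_apply y).symm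
  · exact (hy _ (s.symm hx) (hp.apply_ne x).symm).ne (hp.idx_apply x)

-- The fresh point of the pair of largest index met by the path forces the equality.
theorem exists_eq_of_cycle (hp : IsFreshPairing s σ idx) {n : ℕ} (hn : 0 < n) {y : ℕ → α}
    (hcyc : y n = y 0) (hy : ∀ k < n, s (y k) (σ (y (k + 1)))) :
    ∃ j < n, y j = σ (y (j + 1)) := by
  obtain ⟨k, hk, hmax⟩ :=
    Finset.exists_max_image (Finset.range n) (idx ∘ y) ⟨0, Finset.mem_range.2 hn⟩
  have hk : k < n := Finset.mem_range.1 hk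
  have hle : ∀ j ≤ n, idx (y j) ≤ idx (y k) := by
    intro j hj
    rcases hj.lt_or_eq with hj | rfl
    · exact hmax j (Finset.mem_range.2 hj)
    · rw [hcyc]; exact hmax 0 (Finset.mem_range.2 hn)
  obtain ⟨b, hb, hfresh⟩ := hp.exists_fresh (y k)
  have hidx : idx b = idx (y k) := by rcases hb with rfl | rfl <;> simp [hp.idx_apply]
  have hforce : ∀ w, s w b → idx w ≤ idx (y k) → w = b := fun w hw hwle =>
    by_contra fun hne => (hfresh w hw hne).not_ge (hidx ▸ hwle)
  rcases hb with rfl | rfl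
  · refine ⟨k, hk, (hforce _ (s.symm (hy k hk)) ?_).symm⟩
    rw [hp.idx_apply]
    exact hle _ hk
  · obtain ⟨j, hj, hjk⟩ : ∃ j < n, y (j + 1) = y k := by
      rcases k with _ | j
      · exact ⟨n - 1, by omega, by rw [Nat.sub_add_cancel hn, hcyc]⟩
      · exact ⟨j, by omega, rfl⟩
    refine ⟨j, hj, ?_⟩
    rw [hjk]
    exact hforce _ (hjk ▸ hy j hj) (hle j hj.le)

variable {G : Subgroup (Perm α)}

theorem fixedPoints_sigmaWord_subset (hp : IsFreshPairing (orbitRel G α) σ idx)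
    {l : List G} (hl : l ≠ []) :
    {x | sigmaWord σ l x = x} ⊆ ⋃ k ∈ Finset.range l.length,
      sigmaWord σ (l.drop k) ⁻¹' {y | (l.getD k 1 : Perm α) y = y} := by
  intro x hx
  set y : ℕ → α := fun k => sigmaWord σ (l.drop k) x
  have hstep : ∀ k < l.length, y k = (l.getD k 1 : Perm α) (σ (y (k + 1))) := by
    intro k hk
    simp only [y, List.drop_eq_getElem_cons hk, List.getD_eq_getElem _ _ hk, sigmaWord_cons,
      Perm.mul_apply]
  obtain ⟨j, hj, hfix⟩ := hp.exists_eq_of_cycle (List.length_pos_iff.2 hl) (y := y)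
    (by simpa [y] using hx.symm) fun k hk => hstep k hk ▸ mem_orbit _ _
  refine Set.mem_biUnion (Finset.mem_range.2 hj) ?_
  calc (l.getD j 1 : Perm α) (y j) = (l.getD j 1 : Perm α) (σ (y (j + 1))) := by rw [hfix]
    _ = y j := (hstep j hj).symm

theorem mk_fixedPoints_sigmaWord_lt (hp : IsFreshPairing (orbitRel G α) σ idx)
    (hα : ℵ₀ ≤ #α) (hcof : IsKappaCofinitary G) {l : List G} (hl : l ≠ []) (h1 : 1 ∉ l) :
    #{x | sigmaWord σ l x = x} < #α := by
  refine (mk_le_mk_of_subset (hp.fixedPoints_sigmaWord_subset hl)).trans_lt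
    (mk_biUnion_finset_lt hα _ fun k hk => ?_)
  have hk := Finset.mem_range.1 hk
  rw [mk_preimage_equiv, List.getD_eq_getElem _ _ hk]
  exact hcof _ l[k].2 fun h => h1 ((Subtype.ext h : l[k] = 1) ▸ List.getElem_mem hk)

theorem sigmaWord_eq_one_or_mk_fixedPoints_lt (hp : IsFreshPairing (orbitRel G α) σ idx)
    (hα : ℵ₀ ≤ #α) (hcof : IsKappaCofinitary G) (l : List G) :
    sigmaWord σ l = 1 ∨ #{x | sigmaWord σ l x = x} < #α := by
  induction hn : l.length using Nat.strong_induction_on generalizing l with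
  | _ n ih =>
  by_cases h1 : 1 ∈ l
  · obtain ⟨a, b, rfl⟩ := List.append_of_mem h1
    refine (isConj_sigmaWord_append_comm σ (1 :: b) a).eq_one_or_mk_fixedPoints_lt_iff.1 ?_
    rw [List.cons_append]
    rcases hc : b ++ a with _ | ⟨h, t⟩
    · right
      simp only [sigmaWord_cons, sigmaWord_nil, Subgroup.coe_one, one_mul, mul_one]
      have : IsEmpty ({x | σ x = x} : Set α) := ⟨fun x => hp.apply_ne x x.2⟩
      rw [mk_eq_zero]
      exact aleph0_pos.trans_le hα
    obtain rfl | ⟨d, k, rfl⟩ := t.eq_nil_or_concat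
    · refine (isConj_sigmaWord_one_pair hp.mul_self h).eq_one_or_mk_fixedPoints_lt_iff.1 ?_
      exact or_iff_not_imp_left.2 (hcof h h.2)
    · rw [List.concat_eq_append] at hc ⊢
      refine (isConj_sigmaWord_one_cons_cons_concat hp.mul_self h k d
        |>.eq_one_or_mk_fixedPoints_lt_iff).1 (ih _ ?_ _ rfl)
      have := congr_arg List.length hc
      simp only [List.length_append, List.length_cons, List.length_nil] at this hn ⊢
      omega
  · rcases l with _ | ⟨h, l⟩
    · exact Or.inl rfl
    · exact Or.inr (hp.mk_fixedPoints_sigmaWord_lt hα hcof (List.cons_ne_nil h l) h1)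

theorem isKappaCofinitary_closure (hp : IsFreshPairing (orbitRel G α) σ idx) (hα : ℵ₀ ≤ #α)
    (hcof : IsKappaCofinitary G) : IsKappaCofinitary (Subgroup.closure (G ∪ {σ})) := by
  intro f hf hf1
  obtain ⟨l, g, rfl⟩ := exists_sigmaWord_mul_of_mem_closure hp.mul_self hf
  refine ((isConj_iff.2 ⟨(g : Perm α)⁻¹, by group⟩ : IsConj (g * sigmaWord σ l) _)
    |>.eq_one_or_mk_fixedPoints_lt_iff.1 ?_).resolve_left hf1
  rcases l with _ | ⟨h, l⟩
  · simpa using or_iff_not_imp_left.2 (hcof g g.2)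
  · rw [show g * sigmaWord σ (h :: l) = sigmaWord σ (g * h :: l) by simp [mul_assoc]]
    exact hp.sigmaWord_eq_one_or_mk_fixedPoints_lt hα hcof _

end IsFreshPairing

namespace FreshPairing

variable [LinearOrder α] [WellFoundedLT α] (s : Setoid α)

/-- `U` stands for the set of points paired at earlier stages. -/
noncomputable def step (ξ : α) (U : Set α) : Option α :=
  haveI := Classical.dec (ξ ∈ U)
  if ξ ∈ U then none else some (@Classical.epsilon _ ⟨ξ⟩ fun c => ∀ u ∈ insert ξ U, ¬ s u c)

noncomputable def partner : α → Option α :=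
  wellFounded_lt.fix fun ξ ih =>
    step s ξ {u | ∃ η, ∃ h : η < ξ, ∃ c, ih η h = some c ∧ (u = η ∨ u = c)}

def pairedBefore (ξ : α) : Set α :=
  {u | ∃ η, ∃ _ : η < ξ, ∃ c, partner s η = some c ∧ (u = η ∨ u = c)}

theorem partner_eq (ξ : α) : partner s ξ = step s ξ (pairedBefore s ξ) :=
  wellFounded_lt.fix_eq _ _

variable {s}

theorem mk_pairedBefore_lt (hα : ℵ₀ ≤ #α) (hord : (#α).ord = typeLT α) (ξ : α) :
    #(pairedBefore s ξ) < #α := by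
  have hsub : pairedBefore s ξ ⊆ Iio ξ ∪ (fun η => (partner s η).getD η) '' Iio ξ := by
    rintro u ⟨η, hη, c, hc, rfl | rfl⟩
    · exact Or.inl hη
    · exact Or.inr ⟨η, hη, by simp [hc]⟩
  have hIio := mk_Iio_lt ξ hord
  exact (mk_le_mk_of_subset hsub).trans_lt <|
    (mk_union_le _ _).trans_lt (add_lt_of_lt hα hIio (mk_image_le.trans_lt hIio))

theorem exists_partner_eq_some {ξ : α} (hξ : ξ ∉ pairedBefore s ξ) :
    ∃ c, partner s ξ = some c := by
  rw [partner_eq, step, if_neg hξ]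
  exact ⟨_, rfl⟩

theorem partner_eq_some (hα : ℵ₀ ≤ #α) (hord : (#α).ord = typeLT α) (hQ : #α ≤ #(Quotient s))
    {ξ c : α} (h : partner s ξ = some c) :
    ξ ∉ pairedBefore s ξ ∧ ∀ u ∈ insert ξ (pairedBefore s ξ), ¬ s u c := by
  rw [partner_eq, step] at h
  split_ifs at h with hξ
  refine ⟨hξ, Option.some.inj h ▸ Classical.epsilon_spec (p := fun c => ∀ u ∈ _, ¬ s u c) ?_⟩
  exact s.exists_forall_not_rel_of_mk_lt hQ <| mk_insert_le.trans_lt <|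
    add_lt_of_lt hα (mk_pairedBefore_lt hα hord ξ) (one_lt_aleph0.trans_le hα)

theorem exists_mem_pair (x : α) : ∃ η c, partner s η = some c ∧ (x = η ∨ x = c) := by
  by_cases hx : x ∈ pairedBefore s x
  · obtain ⟨η, -, c, hc, hx⟩ := hx
    exact ⟨η, c, hc, hx⟩
  · obtain ⟨c, hc⟩ := exists_partner_eq_some hx
    exact ⟨x, c, hc, Or.inl rfl⟩

theorem not_lt_of_mem_pair (hα : ℵ₀ ≤ #α) (hord : (#α).ord = typeLT α) (hQ : #α ≤ #(Quotient s))
    {η η' c c' x : α} (h : partner s η = some c) (hx : x = η ∨ x = c)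
    (h' : partner s η' = some c') (hx' : x = η' ∨ x = c') : ¬ η < η' := by
  intro hlt
  obtain ⟨hη', hfresh⟩ := partner_eq_some hα hord hQ h'
  have hpaired : x ∈ pairedBefore s η' := ⟨η, hlt, c, h, hx⟩
  rcases hx' with rfl | rfl
  · exact hη' hpaired
  · exact hfresh x (mem_insert_of_mem _ hpaired) (s.refl x)

theorem mem_pair_unique (hα : ℵ₀ ≤ #α) (hord : (#α).ord = typeLT α) (hQ : #α ≤ #(Quotient s))
    {η η' c c' x : α} (h : partner s η = some c) (hx : x = η ∨ x = c)
    (h' : partner s η' = some c') (hx' : x = η' ∨ x = c') : η = η' ∧ c = c' := by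
  have hη : η = η' := le_antisymm (not_lt.1 (not_lt_of_mem_pair hα hord hQ h' hx' h hx))
    (not_lt.1 (not_lt_of_mem_pair hα hord hQ h hx h' hx'))
  exact ⟨hη, Option.some.inj (by rw [← h, ← h', hη])⟩

theorem exists_isFreshPairing (hα : ℵ₀ ≤ #α) (hord : (#α).ord = typeLT α)
    (hQ : #α ≤ #(Quotient s)) : ∃ (σ : Perm α) (idx : α → α), IsFreshPairing s σ idx := by
  choose η c hc hmem using exists_mem_pair (s := s)
  have hunique x y (hy : y = η x ∨ y = c x) : η y = η x ∧ c y = c x :=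
    mem_pair_unique hα hord hQ (hc y) (hmem y) (hc x) hy
  have hfresh x := (partner_eq_some hα hord hQ (hc x)).2
  have hne : ∀ x, η x ≠ c x := fun x h => hfresh x (η x) (mem_insert _ _) (h ▸ s.refl _)
  let f x := if x = η x then c x else η x
  have hf : ∀ x, f x = η x ∧ x = c x ∨ f x = c x ∧ x = η x := by
    intro x
    by_cases hx : x = η x
    · exact Or.inr ⟨if_pos hx, hx⟩
    · exact Or.inl ⟨if_neg hx, (hmem x).resolve_left hx⟩
  have hinv : Function.Involutive f := by
    intro x
    rcases hf x with ⟨hfx, hx⟩ | ⟨hfx, hx⟩ <;>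
      obtain ⟨hη, hc'⟩ := hunique x (f x) (by tauto) <;>
      rcases hf (f x) with ⟨h1, h2⟩ | ⟨h1, h2⟩ <;> grind
  refine ⟨hinv.toPerm f, η, hinv, fun x hx => ?_, fun x => (hunique x (f x) ?_).1,
    fun x => ⟨c x, ?_, fun z hz hzc => ?_⟩⟩
  · rcases hf x with ⟨h1, h2⟩ | ⟨h1, h2⟩
    · exact hne x (h1.symm.trans (hx.trans h2))
    · exact hne x (h2.symm.trans (hx.symm.trans h1))
  · exact (hf x).imp And.left And.left
  · exact (hf x).imp (fun h => h.2.symm) fun h => h.1.symm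
  · rw [(hunique x (c x) (Or.inr rfl)).1]
    by_contra hle
    rcases (not_lt.1 hle).lt_or_eq with hlt | heq
    · exact hfresh x z (mem_insert_of_mem _ ⟨η z, hlt, c z, hc z, hmem z⟩) hz
    · have hcz : c z = c x := Option.some.inj (by rw [← hc z, ← hc x, heq])
      rcases hmem z with h | h
      · exact hfresh x z (h.trans heq ▸ mem_insert _ _) hz
      · exact hzc (h.trans hcz)

end FreshPairing

theorem kappa_maximal_cofinitary_group_lt_kappa_orbits_general
    {α : Type u}
    (hunc : ℵ₀ < #α)
    (G : Subgroup (Equiv.Perm α))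
    (hcof : IsKappaCofinitary G)
    (hmax : ∀ H : Subgroup (Equiv.Perm α), G ≤ H → IsKappaCofinitary H → H = G) :
    #(Quotient (MulAction.orbitRel G α)) < #α := by
  by_contra! hQ
  obtain ⟨_, _, hord⟩ := exists_ord_eq_type_lt α
  obtain ⟨σ, idx, hp⟩ := FreshPairing.exists_isFreshPairing hunc.le hord hQ
  have hGH : G ≤ Subgroup.closure (G ∪ {σ}) := fun g hg => Subgroup.subset_closure (Or.inl hg)
  have hσ : σ ∈ Subgroup.closure (G ∪ {σ}) := Subgroup.subset_closure (Or.inr rfl)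
  rw [hmax _ hGH (hp.isKappaCofinitary_closure hunc.le hcof)] at hσ
  obtain ⟨x⟩ := mk_ne_zero_iff.1 (aleph0_pos.trans hunc).ne'
  exact hp.not_rel_apply x (mem_orbit x (⟨σ, hσ⟩ : G))

/-- A `κ`-maximal cofinitary group has fewer than `κ` many orbits. -/
theorem kappa_maximal_cofinitary_group_lt_kappa_orbits
    {α : Type u}
    (hreg : (#α).IsRegular) (hunc : ℵ₀ < #α)
    (hpow : #α ^< #α = #α)
    (G : Subgroup (Equiv.Perm α))
    (hcof : IsKappaCofinitary G)
    (hmax : ∀ H : Subgroup (Equiv.Perm α), G ≤ H → IsKappaCofinitary H → H = G) :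
    #(Quotient (MulAction.orbitRel G α)) < #α :=
  kappa_maximal_cofinitary_group_lt_kappa_orbits_general hunc G hcof hmax
end

section
/- Let κ be regular uncountable with κ^{<κ} = κ, let A be a set with |A| ≤ κ, and let ρ : B → S(κ) induce a κ-cofinitary representation with A ∩ B = ∅. Then the forcing notion Q^κ_{A,ρ} is κ-centered: it is the union of κ many subsets, each of which is directed (any two conditions with the same first coordinate are compatible). -/
open Cardinal

universe u

variable {A B α : Type u}

/-- A letter of a word over the alphabet `A ∪ B`, with a sign
(`true` for the letter itself, `false` for its inverse). -/
abbrev CofLetter (A B : Type u) : Type u := (A ⊕ B) × Bool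

/-- The binary relation on `α` determined by a single letter: generators from `A`
are interpreted by the sections of `s ⊆ A × α × α`, generators from `B` by `ρ`. -/
def letterRel (s : Set (A × α × α)) (ρ : B → Equiv.Perm α) : CofLetter A B → Set (α × α)
  | (Sum.inl a, true) => {p | (a, p.1, p.2) ∈ s}
  | (Sum.inl a, false) => {p | (a, p.2, p.1) ∈ s}
  | (Sum.inr b, true) => {p | ρ b p.1 = p.2}
  | (Sum.inr b, false) => {p | ρ b p.2 = p.1}

/-- Evaluation `e_w[s, ρ]` of a word `w` (a list of letters, the head of the list
being the outermost letter) as a binary relation on `α`. -/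
def evalWord (s : Set (A × α × α)) (ρ : B → Equiv.Perm α) :
    List (CofLetter A B) → Set (α × α)
  | [] => {p | p.1 = p.2}
  | l :: w => {p | ∃ y, (p.1, y) ∈ evalWord s ρ w ∧ (y, p.2) ∈ letterRel s ρ l}

/-- A word is reduced if no letter is immediately followed by its inverse. -/
def ReducedWord (w : List (CofLetter A B)) : Prop :=
  w.Chain' fun l m => ¬(l.1 = m.1 ∧ l.2 = !m.2)

/-- A good word: a nonempty reduced word which is either a power of a single letter
or starts and ends with different letters. -/
def GoodWord (w : List (CofLetter A B)) : Prop :=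
  w ≠ [] ∧ ReducedWord w ∧
    ((∃ l, ∀ m ∈ w, m = l) ∨
      (∃ h t, w.head? = some h ∧ w.getLast? = some t ∧ h.1 ≠ t.1))

/-- `ρ : B → S(α)` induces a `κ`-cofinitary representation: every non-identity
element of the image of its canonical extension to the free group on `B` has
fewer than `κ = #α` fixed points. -/
def InducesCofinitaryRep (ρ : B → Equiv.Perm α) : Prop :=
  ∀ g ∈ (FreeGroup.lift ρ).range, g ≠ 1 → #{x : α | g x = x} < #α

/-- A condition of the forcing `Q^κ_{A,ρ}` for adding a `κ`-maximal cofinitary group. -/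
structure QCond (A B α : Type u) (ρ : B → Equiv.Perm α) where
  /-- the finite-approximation part `s` -/
  s : Set (A × α × α)
  /-- the side condition: a small set of good words -/
  F : Set (List (CofLetter A B))
  s_small : #s < #α
  F_small : #F < #α
  inj : ∀ a : A, ∀ x y x' y' : α, (a, x, y) ∈ s → (a, x', y') ∈ s → (x = x' ↔ y = y')
  good : ∀ w ∈ F, GoodWord w

/-- The extension relation of `Q^κ_{A,ρ}`: `p ≤ q` iff `p` end-extends `q` and no
word of `q.F` gains new fixed points. -/
def QLE (ρ : B → Equiv.Perm α) (p q : QCond A B α ρ) : Prop :=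
  q.s ⊆ p.s ∧ q.F ⊆ p.F ∧
    ∀ w ∈ q.F, ∀ x : α, (x, x) ∈ evalWord p.s ρ w → (x, x) ∈ evalWord q.s ρ w

/-! Two conditions with the same first coordinate `s` have the common extension `(s, F ∪ F')`,
so it suffices to see that there are at most `κ` possible first coordinates: they are subsets of
size `< κ` of a set of size `κ`, and there are `κ ^< κ = κ` of those. -/

namespace Cardinal

open Ordinal

theorem exists_card_typein_eq {r : α → α → Prop} [IsWellOrder α r] (hr : (#α).ord = type r)
    {c : Cardinal.{u}} (hc : c < #α) : ∃ i, #{j // r j i} = c := by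
  obtain ⟨i, hi⟩ := typein_surj r (hr ▸ ord_lt_ord.2 hc)
  exact ⟨i, by rw [← card_typein, hi, card_ord]⟩

/-- Sets of size `< κ` are covered by the sets of size `≤ c` for the `κ` many sizes `c` of proper
initial segments of a well-order of type `κ`; each of these families has size `κ ^ c ≤ κ ^< κ`. -/
theorem mk_set_mk_lt_le_powerlt (hα : ℵ₀ ≤ #α) : #{t : Set α // #t < #α} ≤ #α ^< #α := by
  have : Infinite α := infinite_iff.2 hα
  obtain ⟨r, _, hr⟩ := exists_ord_eq α
  have hcover : {t : Set α | #t < #α} ⊆ ⋃ i, {t : Set α | #t ≤ #{j // r j i}} := fun t ht ↦ by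
    obtain ⟨i, hi⟩ := exists_card_typein_eq hr ht
    exact Set.mem_iUnion.2 ⟨i, hi.ge⟩
  have hpiece (i : α) : #{t : Set α | #t ≤ #{j // r j i}} ≤ #α ^< #α :=
    (mk_bounded_set_le_of_infinite α _).trans (le_powerlt _ (card_typein_lt i hr))
  have hle : #α ≤ #α ^< #α := by
    simpa using le_powerlt #α (one_lt_aleph0.trans_le hα)
  calc #{t : Set α // #t < #α}
      ≤ #α * ⨆ i, #{t : Set α | #t ≤ #{j // r j i}} :=
        (mk_le_mk_of_subset hcover).trans (mk_iUnion_le _)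
    _ ≤ (#α ^< #α) * (#α ^< #α) := mul_le_mul' hle (ciSup_le' hpiece)
    _ = #α ^< #α := mul_eq_self (hα.trans hle)

theorem mk_set_mk_lt_le_of_mk_le {X : Type u} (hX : #X ≤ #α) :
    #{t : Set X // #t < #α} ≤ #{t : Set α // #t < #α} := by
  obtain ⟨e⟩ := hX
  exact ⟨.subtypeMap (Function.Embedding.image e) fun _ ht ↦ mk_image_le.trans_lt ht⟩

end Cardinal

namespace QCond

variable {ρ : B → Equiv.Perm α}

theorem qle_of_s_eq_of_F_subset {p q : QCond A B α ρ} (hs : p.s = q.s) (hF : q.F ⊆ p.F) :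
    QLE ρ p q :=
  ⟨hs.ge, hF, fun _ _ _ h ↦ hs ▸ h⟩

def amalgam (p q : QCond A B α ρ) (hα : ℵ₀ ≤ #α) : QCond A B α ρ where
  s := p.s
  F := p.F ∪ q.F
  s_small := p.s_small
  F_small := (mk_union_le _ _).trans_lt (add_lt_of_lt hα p.F_small q.F_small)
  inj := p.inj
  good _ hw := hw.elim (p.good _) (q.good _)

theorem amalgam_le_left (p q : QCond A B α ρ) (hα : ℵ₀ ≤ #α) : QLE ρ (p.amalgam q hα) p :=
  qle_of_s_eq_of_F_subset rfl Set.subset_union_left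

theorem amalgam_le_right {p q : QCond A B α ρ} (hα : ℵ₀ ≤ #α) (hs : p.s = q.s) :
    QLE ρ (p.amalgam q hα) q :=
  qle_of_s_eq_of_F_subset hs Set.subset_union_right

end QCond

theorem QCond_kappa_centered_general
    (hunc : ℵ₀ < #α) (hpow : #α ^< #α = #α)
    (hA : #A ≤ #α)
    (ρ : B → Equiv.Perm α) :
    ∃ C : α → Set (QCond A B α ρ),
      (⋃ γ : α, C γ) = Set.univ ∧
      ∀ γ : α, ∀ p ∈ C γ, ∀ q ∈ C γ, ∃ r : QCond A B α ρ, QLE ρ r p ∧ QLE ρ r q := by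
  have hα : ℵ₀ ≤ #α := hunc.le
  have hX : #(A × α × α) ≤ #α := by
    simpa [mul_eq_self hα] using mul_le_mul_left hA (#α * #α)
  obtain ⟨f⟩ : #{t : Set (A × α × α) // #t < #α} ≤ #α :=
    (mk_set_mk_lt_le_of_mk_le hX).trans ((mk_set_mk_lt_le_powerlt hα).trans hpow.le)
  refine ⟨fun γ ↦ {p | f ⟨p.s, p.s_small⟩ = γ}, ?_, ?_⟩
  · exact Set.eq_univ_of_forall fun p ↦ Set.mem_iUnion.2 ⟨_, rfl⟩
  · rintro γ p rfl q hq
    have hs : p.s = q.s := congrArg Subtype.val (f.injective hq.symm)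
    exact ⟨p.amalgam q hα, p.amalgam_le_left q hα, QCond.amalgam_le_right hα hs⟩

/-- If `|A| ≤ κ` then `Q^κ_{A,ρ}` is `κ`-centered. -/
theorem QCond_kappa_centered
    (hreg : (#α).IsRegular) (hunc : ℵ₀ < #α) (hpow : #α ^< #α = #α)
    (hA : #A ≤ #α)
    (ρ : B → Equiv.Perm α) (hρ : InducesCofinitaryRep ρ) :
    ∃ C : α → Set (QCond A B α ρ),
      (⋃ γ : α, C γ) = Set.univ ∧
      ∀ γ : α, ∀ p ∈ C γ, ∀ q ∈ C γ, ∃ r : QCond A B α ρ, QLE ρ r p ∧ QLE ρ r q :=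
  QCond_kappa_centered_general hunc hpow hA ρ
end

section
/- Let κ be regular uncountable with κ^{<κ} = κ and |A| ≤ κ. Then Q^κ_{A,ρ} is <κ-closed: every decreasing sequence of conditions of length < κ has a lower bound, namely the coordinatewise union. -/
open Cardinal

universe u

variable {A B α : Type u}

/-- If `|A| ≤ κ` then `Q^κ_{A,ρ}` is `<κ`-closed: any decreasing sequence of
conditions of length `< κ` has a lower bound, given coordinatewise by unions. -/
theorem QCond_lt_kappa_closed
    (hreg : (#α).IsRegular) (hunc : ℵ₀ < #α) (hpow : #α ^< #α = #α)
    (hA : #A ≤ #α)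
    (ρ : B → Equiv.Perm α) (hρ : InducesCofinitaryRep ρ)
    (ι : Type u) [LinearOrder ι] (hι : #ι < #α)
    (p : ι → QCond A B α ρ)
    (hdec : ∀ i j : ι, i ≤ j → QLE ρ (p j) (p i)) :
    ∃ q : QCond A B α ρ,
      q.s = (⋃ i : ι, (p i).s) ∧ q.F = (⋃ i : ι, (p i).F) ∧
      ∀ i : ι, QLE ρ q (p i) := by
  classical
  have haleph : ℵ₀ ≤ #α := hreg.aleph0_le
  have small : ∀ {X : Type u} (f : ι → Set X), (∀ i, #(f i) < #α) → #(⋃ i, f i) < #α := by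
    intro X f hf
    calc #(⋃ i, f i) ≤ #ι * ⨆ i, #(f i) := Cardinal.mk_iUnion_le f
      _ < #α := Cardinal.mul_lt_of_lt haleph hι
          (Cardinal.iSup_lt_of_isRegular hreg hι hf)
  have mono : ∀ {s t : Set (A × α × α)}, s ⊆ t → ∀ w,
      evalWord s ρ w ⊆ evalWord t ρ w := by
    intro s t hst w
    induction w with
    | nil => exact fun q hq => hq
    | cons l w ih =>
      rintro ⟨x, y⟩ ⟨z, hz, hl⟩
      refine ⟨z, ih hz, ?_⟩
      obtain ⟨g, b⟩ := l
      cases g with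
      | inl a => cases b <;> exact hst hl
      | inr b' => cases b <;> exact hl
  have find : ∀ (w : List (CofLetter A B)) (i : ι) (x y : α),
      (x, y) ∈ evalWord (⋃ k, (p k).s) ρ w →
      ∃ j, i ≤ j ∧ (x, y) ∈ evalWord (p j).s ρ w := by
    intro w i
    induction w with
    | nil => exact fun x y h => ⟨i, le_refl i, h⟩
    | cons l w ih =>
      rintro x y ⟨z, hz, hl⟩
      obtain ⟨j, hij, hj⟩ := ih x z hz
      obtain ⟨g, b⟩ := l
      cases g with
      | inr b' => cases b <;> exact ⟨j, hij, z, hj, hl⟩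
      | inl a =>
        cases b with
        | true =>
          obtain ⟨k, hk⟩ : ∃ k, (a, z, y) ∈ (p k).s := Set.mem_iUnion.mp hl
          rcases le_total j k with h | h
          · exact ⟨k, hij.trans h, z, mono (hdec j k h).1 w hj, hk⟩
          · exact ⟨j, hij, z, hj, (hdec k j h).1 hk⟩
        | false =>
          obtain ⟨k, hk⟩ : ∃ k, (a, y, z) ∈ (p k).s := Set.mem_iUnion.mp hl
          rcases le_total j k with h | h
          · exact ⟨k, hij.trans h, z, mono (hdec j k h).1 w hj, hk⟩
          · exact ⟨j, hij, z, hj, (hdec k j h).1 hk⟩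
  refine ⟨⟨⋃ i, (p i).s, ⋃ i, (p i).F,
      small _ (fun i => (p i).s_small), small _ (fun i => (p i).F_small),
      ?_, ?_⟩, rfl, rfl, ?_⟩
  · intro a x y x' y' hxy hxy'
    obtain ⟨i, hi⟩ := Set.mem_iUnion.mp hxy
    obtain ⟨j, hj⟩ := Set.mem_iUnion.mp hxy'
    rcases le_total i j with h | h
    · exact (p j).inj a x y x' y' ((hdec i j h).1 hi) hj
    · exact (p i).inj a x y x' y' hi ((hdec j i h).1 hj)
  · intro w hw
    obtain ⟨i, hi⟩ := Set.mem_iUnion.mp hw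
    exact (p i).good w hi
  · intro i
    refine ⟨Set.subset_iUnion (fun k => (p k).s) i, Set.subset_iUnion (fun k => (p k).F) i, ?_⟩
    intro w hw x hx
    obtain ⟨j, hij, hj⟩ := find w i x x hx
    exact (hdec i j hij).2.2 w hw x hj
end

section
/- Let κ be regular uncountable with κ^{<κ} = κ and |A| ≤ κ. Then Q^κ_{A,ρ} has canonical lower bounds: there is a decomposition Q^κ_{A,ρ} = ⋃_{γ<κ} C_γ into directed pieces and a function f : κ^{<κ} → κ such that whenever λ < κ and (p_α : α < λ) is a decreasing sequence of conditions with p_α ∈ C_{γ_α}, there is a lower bound p of the sequence with p ∈ C_{f(⟨γ_α : α<λ⟩)}. -/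
open Cardinal

universe u

variable {A B α : Type u}

/-!
Two conditions with the same first coordinate `s` have the common extension `(s, F ∪ F')`, so
the pieces `C γ` are the sets of conditions whose first coordinate is the `γ`-th set of size
`< κ`; since `κ^{<κ} = κ` there are only `κ` of these. A decreasing sequence of length `λ < κ`
has the union of its coordinates as a lower bound: regularity keeps it small, and a word,
being evaluated letter by letter, already has each of its fixed points under the union at
some stage of the sequence, so it gains no new ones. The first coordinate of that bound, hence
its piece, depends only on the pieces `γ_α` of the members of the sequence.
-/

namespace Cardinal

theorem mk_bounded_set_lt_le {β : Type u} {κ : Cardinal.{u}} (hβ : #β ≤ κ) (hκ : ℵ₀ ≤ κ)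
    (hpow : κ ^< κ = κ) : #{t : Set β // #t < κ} ≤ κ := by
  let ι := κ.ord.ToType
  have hcover : {t : Set β | #t < κ} ⊆ ⋃ i : ι, {t | #t ≤ #(Set.Iio i)} := by
    intro t ht
    obtain ⟨i, hi⟩ := Ordinal.typein_surj (α := ι) (· < ·)
      (show (#t).ord < Ordinal.type (α := ι) (· < ·) by simpa [ι] using ord_lt_ord.2 ht)
    refine Set.mem_iUnion.2 ⟨i, ?_⟩
    change #t ≤ #{y // y < i}
    rw [← Ordinal.card_typein, hi, card_ord]
  calc #{t : Set β // #t < κ}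
      ≤ #(⋃ i : ι, {t : Set β | #t ≤ #(Set.Iio i)}) := mk_le_mk_of_subset hcover
    _ ≤ #ι * ⨆ i : ι, #{t : Set β | #t ≤ #(Set.Iio i)} := mk_iUnion_le _
    _ ≤ κ * κ := by
        refine mul_le_mul' (by simp [ι]) (ciSup_le' fun i => ?_)
        calc #{t : Set β | #t ≤ #(Set.Iio i)}
            ≤ max #β ℵ₀ ^ #(Set.Iio i) := mk_bounded_set_le β _
          _ ≤ κ ^ #(Set.Iio i) := power_le_power_right (max_le hβ hκ)
          _ ≤ κ := (le_powerlt κ (by simpa [ι] using mk_Iio_lt i)).trans hpow.le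
    _ = κ := mul_eq_self hκ

end Cardinal

theorem exists_bounded_set_subset_range {β : Type u} (hβ : #β ≤ #α) (hκ : ℵ₀ ≤ #α)
    (hpow : #α ^< #α = #α) : ∃ d : α → Set β, {t : Set β | #t < #α} ⊆ Set.range d := by
  obtain ⟨e⟩ := Cardinal.mk_bounded_set_lt_le hβ hκ hpow
  have : Nonempty {t : Set β // #t < #α} := ⟨⟨∅, by simpa using hκ.trans_lt' aleph0_pos⟩⟩
  refine ⟨fun x => (Function.invFun e x).1, fun t ht => ⟨e ⟨t, ht⟩, ?_⟩⟩
  simp only [Function.leftInverse_invFun e.injective _]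

theorem letterRel_mono {s t : Set (A × α × α)} (h : s ⊆ t) (ρ : B → Equiv.Perm α)
    (l : CofLetter A B) : letterRel s ρ l ⊆ letterRel t ρ l := by
  rcases l with ⟨a | b, _ | _⟩ <;> intro p hp
  exacts [h hp, h hp, hp, hp]

theorem evalWord_mono {s t : Set (A × α × α)} (h : s ⊆ t) (ρ : B → Equiv.Perm α) :
    ∀ w : List (CofLetter A B), evalWord s ρ w ⊆ evalWord t ρ w
  | [] => subset_rfl
  | l :: w => fun _ ⟨y, hy, hl⟩ => ⟨y, evalWord_mono h ρ w hy, letterRel_mono h ρ l hl⟩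

theorem letterRel_iUnion {ι : Type*} [Nonempty ι] (S : ι → Set (A × α × α))
    (ρ : B → Equiv.Perm α) (l : CofLetter A B) :
    letterRel (⋃ i, S i) ρ l = ⋃ i, letterRel (S i) ρ l := by
  rcases l with ⟨a | b, _ | _⟩ <;> ext <;> simp [letterRel]

theorem evalWord_iUnion_of_directed {ι : Type*} [Nonempty ι] {S : ι → Set (A × α × α)}
    (hS : Directed (· ⊆ ·) S) (ρ : B → Equiv.Perm α) (w : List (CofLetter A B)) :
    evalWord (⋃ i, S i) ρ w = ⋃ i, evalWord (S i) ρ w := by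
  induction w with
  | nil => simp only [evalWord, Set.iUnion_const]
  | cons l w ih =>
    ext p
    simp only [evalWord, Set.mem_ofPred_eq, ih, letterRel_iUnion, Set.mem_iUnion]
    constructor
    · rintro ⟨y, ⟨i, hi⟩, ⟨j, hj⟩⟩
      obtain ⟨k, hik, hjk⟩ := hS i j
      exact ⟨k, y, evalWord_mono hik ρ w hi, letterRel_mono hjk ρ l hj⟩
    · rintro ⟨i, y, hi, hl⟩
      exact ⟨y, ⟨i, hi⟩, ⟨i, hl⟩⟩

namespace QCond

variable {ρ : B → Equiv.Perm α}

theorem exists_le_le_of_s_eq (hκ : ℵ₀ ≤ #α) {p q : QCond A B α ρ} (h : p.s = q.s) :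
    ∃ r : QCond A B α ρ, QLE ρ r p ∧ QLE ρ r q := by
  refine ⟨⟨p.s, p.F ∪ q.F, p.s_small, ?_, p.inj, ?_⟩, ⟨subset_rfl, Set.subset_union_left,
    fun _ _ _ hx => hx⟩, ⟨h.ge, Set.subset_union_right, fun _ _ _ hx => h ▸ hx⟩⟩
  · exact (mk_union_le _ _).trans_lt (add_lt_of_lt hκ p.F_small q.F_small)
  · rintro w (hw | hw)
    exacts [p.good w hw, q.good w hw]

section iUnion

variable {ι : Type u} (p : ι → QCond A B α ρ)

theorem directed_s (hp : Directed (fun q r => QLE ρ r q) p) :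
    Directed (· ⊆ ·) fun i => (p i).s :=
  hp.mono_comp _ fun _ _ h => h.1

variable (hreg : (#α).IsRegular) (hι : #ι < #α) (hp : Directed (fun q r => QLE ρ r q) p)

def iUnion : QCond A B α ρ where
  s := ⋃ i, (p i).s
  F := ⋃ i, (p i).F
  s_small := (card_iUnion_lt_iff_forall_of_isRegular hreg hι).2 fun i => (p i).s_small
  F_small := (card_iUnion_lt_iff_forall_of_isRegular hreg hι).2 fun i => (p i).F_small
  inj a x y x' y' hxy hxy' := by
    obtain ⟨i, hi⟩ := Set.mem_iUnion.1 hxy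
    obtain ⟨j, hj⟩ := Set.mem_iUnion.1 hxy'
    obtain ⟨k, hik, hjk⟩ := directed_s p hp i j
    exact (p k).inj a x y x' y' (hik hi) (hjk hj)
  good w hw := by
    obtain ⟨i, hi⟩ := Set.mem_iUnion.1 hw
    exact (p i).good w hi

theorem iUnion_le (i : ι) : QLE ρ (iUnion p hreg hι hp) (p i) := by
  refine ⟨Set.subset_iUnion (fun i => (p i).s) i, Set.subset_iUnion (fun i => (p i).F) i, ?_⟩
  intro w hw x hx
  have : Nonempty ι := ⟨i⟩
  obtain ⟨j, hj⟩ := Set.mem_iUnion.1 ((evalWord_iUnion_of_directed (directed_s p hp) ρ w).le hx)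
  obtain ⟨k, hik, hjk⟩ := hp i j
  exact hik.2.2 w hw x (evalWord_mono hjk.1 ρ w hj)

end iUnion

end QCond

theorem QCond_canonical_lower_bounds_general
    (hreg : (#α).IsRegular) (hpow : #α ^< #α = #α)
    (hA : #A ≤ #α)
    (ρ : B → Equiv.Perm α) :
    ∃ C : α → Set (QCond A B α ρ),
      (⋃ γ : α, C γ) = Set.univ ∧
      (∀ γ : α, ∀ p ∈ C γ, ∀ q ∈ C γ, ∃ r : QCond A B α ρ, QLE ρ r p ∧ QLE ρ r q) ∧
      ∃ f : (o : Ordinal.{u}) → (o.ToType → α) → α,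
        ∀ o : Ordinal.{u}, o < (#α).ord →
          ∀ γ : o.ToType → α, ∀ p : o.ToType → QCond A B α ρ,
            (∀ i : o.ToType, p i ∈ C (γ i)) →
            (∀ i j : o.ToType, i ≤ j → QLE ρ (p j) (p i)) →
            ∃ q : QCond A B α ρ, (∀ i : o.ToType, QLE ρ q (p i)) ∧ q ∈ C (f o γ) := by
  have hκ := hreg.aleph0_le
  have : Nonempty α := mk_ne_zero_iff.1 hreg.pos.ne'
  have hβ : #(A × α × α) ≤ #α := by
    simpa using mul_le_of_le hκ hA (mul_le_of_le hκ le_rfl le_rfl)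
  obtain ⟨d, hd⟩ := exists_bounded_set_subset_range hβ hκ hpow
  refine ⟨fun γ => {p | p.s = d γ}, ?_, ?_, fun o γ => Function.invFun d (⋃ i, d (γ i)), ?_⟩
  · exact Set.eq_univ_of_forall fun p => Set.mem_iUnion.2 ((hd p.s_small).imp fun _ => Eq.symm)
  · exact fun γ p hp q hq => QCond.exists_le_le_of_s_eq hκ (hp.trans hq.symm)
  · intro o ho γ p hpγ hdec
    have hι : #o.ToType < #α := by rwa [mk_toType, ← lt_ord]
    have hdir : Directed (fun q r => QLE ρ r q) p := fun i j =>
      ⟨max i j, hdec i _ (le_max_left i j), hdec j _ (le_max_right i j)⟩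
    let q := QCond.iUnion p hreg hι hdir
    have hq : q.s = ⋃ i, d (γ i) := Set.iUnion_congr hpγ
    refine ⟨q, QCond.iUnion_le p hreg hι hdir, ?_⟩
    exact hq.trans (Function.invFun_eq (hd (hq ▸ q.s_small))).symm

/-- If `|A| ≤ κ` then `Q^κ_{A,ρ}` has canonical lower bounds: there is a
decomposition into `κ` many directed pieces `C γ` covering the poset and a
function `f : κ^{<κ} → κ` such that every decreasing sequence of length `λ < κ`
whose members lie in the pieces `C (γ i)` has a lower bound lying in the piece
indexed by `f` applied to the sequence `γ`. -/
theorem QCond_canonical_lower_bounds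
    (hreg : (#α).IsRegular) (hunc : ℵ₀ < #α) (hpow : #α ^< #α = #α)
    (hA : #A ≤ #α)
    (ρ : B → Equiv.Perm α) (hρ : InducesCofinitaryRep ρ) :
    ∃ C : α → Set (QCond A B α ρ),
      (⋃ γ : α, C γ) = Set.univ ∧
      (∀ γ : α, ∀ p ∈ C γ, ∀ q ∈ C γ, ∃ r : QCond A B α ρ, QLE ρ r p ∧ QLE ρ r q) ∧
      ∃ f : (o : Ordinal.{u}) → (o.ToType → α) → α,
        ∀ o : Ordinal.{u}, o < (#α).ord →
          ∀ γ : o.ToType → α, ∀ p : o.ToType → QCond A B α ρ,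
            (∀ i : o.ToType, p i ∈ C (γ i)) →
            (∀ i j : o.ToType, i ≤ j → QLE ρ (p j) (p i)) →
            ∃ q : QCond A B α ρ, (∀ i : o.ToType, QLE ρ q (p i)) ∧ q ∈ C (f o γ) :=
  QCond_canonical_lower_bounds_general hreg hpow hA ρ
end
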